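/- arXiv:1910.07465 — 5 statements merged into one kernel-verified Lean document; each statement's English description precedes it below -/
import Mathlib

section
/- Vanishing-perturbation corollary: Under the hypotheses of the perturbation theorem with ψ₁ ≡ 0 and ψ₂ ≡ 0 (i.e., ‖g₁(w_p,v_p,z)‖ ≤ γ₁(z)‖w_p‖ and ‖g₂(w_p,v_p,z)‖ ≤ γ₂(z)‖w_p‖, and c₄∫_{z₀}^{z} γ₁ + c₅∫_{z₀}^{z} γ₂ ≤ κ(z−z₀) + η with 0 ≤ κ < c₁c₃/c₂, η ≥ 0), the origin w_p = 0 of the perturbed system dw_p/dz = φ₁(w_p,v_p,z) + g₁(w_p,v_p,z), dv_p/dz = φ₂(w_p,v_p,z) + g₂(w_p,v_p,z) is partially exponentially stable uniformly in v_p; specifically, for any initial time z₀ ∈ ℝ and any initial state with ‖w_p(z₀)‖ < (δ/k₂)√(c₁/c₂), the solution satisfies ‖w_p(z)‖ ≤ k₂√(c₂/c₁)‖w_p(z₀)‖e^{−k₁(z−z₀)} for all z ≥ z₀, where k₁ = c₃/(2c₂) − κ/(2c₁) and k₂ = exp(η/(2c₁)). -/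
/-!
Along a solution that stays in the ball `‖w‖ < δ`, the bounds on `∂V/∂w`, `∂V/∂v` and on the
perturbations give `d/dz V ≤ ((c₄γ₁ + c₅γ₂)/c₁ - c₃/c₂) V`, so by the comparison principle `V`
is at most `V(z₀)` times the exponential of the integral of this rate, which the integral
hypothesis bounds by `η/c₁ - 2k₁(z - z₀)`. The sandwich `c₁‖w‖² ≤ V ≤ c₂‖w‖²` turns this into
the exponential bound on `‖w_p‖`. That bound stays below `δ` under the smallness assumption on
`w_p(z₀)`, so at a first exit time from the ball the norm would have to be both `≥ δ` and `< δ`.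
-/

open Real Set

theorem le_exp_integral_mul_of_hasDerivAt_le {u u' a : ℝ → ℝ} {t₀ t : ℝ} (ha : Continuous a)
    (ht : t₀ ≤ t) (hu : ∀ s ∈ Icc t₀ t, HasDerivAt u (u' s) s)
    (hle : ∀ s ∈ Icc t₀ t, u' s ≤ a s * u s) :
    u t ≤ exp (∫ s in t₀..t, a s) * u t₀ := by
  set A : ℝ → ℝ := fun s => ∫ r in t₀..s, a r
  have hA : ∀ s, HasDerivAt A (a s) s := fun s =>
    (ha.integral_hasStrictDerivAt t₀ s).hasDerivAt
  have hderiv : ∀ s ∈ Icc t₀ t, HasDerivAt (fun r => exp (-A r) * u r)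
      (exp (-A s) * (u' s - a s * u s)) s := fun s hs =>
    (((hA s).neg.exp).mul (hu s hs)).congr_deriv (by simp only [Pi.neg_apply]; ring)
  have hanti : AntitoneOn (fun r => exp (-A r) * u r) (Icc t₀ t) := by
    refine antitoneOn_of_hasDerivWithinAt_nonpos (f' := fun s => exp (-A s) * (u' s - a s * u s))
      (convex_Icc t₀ t)
      (fun s hs => (hderiv s hs).continuousAt.continuousWithinAt) (fun s hs => ?_) (fun s hs => ?_)
    · exact (hderiv s (interior_subset hs)).hasDerivWithinAt
    · exact mul_nonpos_of_nonneg_of_nonpos (exp_pos _).le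
        (sub_nonpos.mpr (hle s (interior_subset hs)))
  have h := hanti (left_mem_Icc.mpr ht) (right_mem_Icc.mpr ht) ht
  simp only [A, intervalIntegral.integral_same, neg_zero, exp_zero, one_mul] at h
  rwa [exp_neg, inv_mul_le_iff₀ (exp_pos _)] at h

theorem forall_lt_of_continuousOn_of_bound {f : ℝ → ℝ} {a B δ : ℝ} (hB : B < δ)
    (hf : ContinuousOn f (Ici a)) (ha : f a < δ)
    (hbound : ∀ t ≥ a, (∀ s ∈ Icc a t, f s < δ) → f t ≤ B) :
    ∀ t ≥ a, f t < δ := by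
  by_contra! hexit
  set T := Ici a ∩ f ⁻¹' Ici δ
  have hT : IsClosed T := hf.preimage_isClosed_of_isClosed isClosed_Ici isClosed_Ici
  have hTne : T.Nonempty := hexit
  have hTbdd : BddBelow T := ⟨a, fun s hs => hs.1⟩
  obtain ⟨ht₁a, ht₁δ⟩ : sInf T ∈ T := hT.csInf_mem hTne hTbdd
  -- `t₁` is the first exit time; before it `f ≤ B`, which continuity carries over to `t₁`.
  set t₁ := sInf T
  have hbefore : ∀ s ∈ Ico a t₁, f s < δ := fun s hs =>
    not_le.mp fun h => (csInf_le hTbdd ⟨hs.1, h⟩).not_gt hs.2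
  have hat₁ : a < t₁ := ht₁a.lt_of_ne fun h => (h ▸ ht₁δ : δ ≤ f a).not_gt ha
  have hB' : ∀ s ∈ Ico a t₁, f s ≤ B := fun s hs =>
    hbound s hs.1 fun r hr => hbefore r ⟨hr.1, hr.2.trans_lt hs.2⟩
  have hcl : closure (Ico a t₁) = Icc a t₁ := closure_Ico hat₁.ne
  have : f t₁ ≤ B := le_on_closure hB' (hcl ▸ hf.mono Icc_subset_Ici_self) continuousOn_const
    (hcl ▸ right_mem_Icc.mpr ht₁a)
  exact (ht₁δ.trans this).not_gt hB

theorem integral_decay_rate_le {γ₁ γ₂ : ℝ → ℝ} {c₁ c₂ c₃ c₄ c₅ κ η z₀ z : ℝ}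
    (hγ₁ : Continuous γ₁) (hγ₂ : Continuous γ₂) (hc₁ : 0 < c₁)
    (h : c₄ * (∫ s in z₀..z, γ₁ s) + c₅ * (∫ s in z₀..z, γ₂ s) ≤ κ * (z - z₀) + η) :
    ∫ s in z₀..z, ((c₄ * γ₁ s + c₅ * γ₂ s) / c₁ - c₃ / c₂)
      ≤ 2 * (η / (2 * c₁) - (c₃ / (2 * c₂) - κ / (2 * c₁)) * (z - z₀)) := by
  have hi₁ := (hγ₁.intervalIntegrable (μ := MeasureTheory.volume) z₀ z).const_mul c₄
  have hi₂ := (hγ₂.intervalIntegrable (μ := MeasureTheory.volume) z₀ z).const_mul c₅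
  rw [intervalIntegral.integral_sub ((hi₁.add hi₂).div_const c₁) intervalIntegrable_const,
    intervalIntegral.integral_div, intervalIntegral.integral_add hi₁ hi₂,
    intervalIntegral.integral_const_mul, intervalIntegral.integral_const_mul,
    intervalIntegral.integral_const, smul_eq_mul]
  have := div_le_div_of_nonneg_right h hc₁.le
  calc _ ≤ (κ * (z - z₀) + η) / c₁ - (z - z₀) * (c₃ / c₂) := by linarith
    _ = _ := by field_simp; ring

theorem le_sqrt_div_mul_mul_exp {x x₀ c₁ c₂ s : ℝ} (hc₁ : 0 < c₁) (hc₂ : 0 ≤ c₂) (hx₀ : 0 ≤ x₀)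
    (h : c₁ * x ^ 2 ≤ exp (2 * s) * (c₂ * x₀ ^ 2)) : x ≤ √(c₂ / c₁) * x₀ * exp s := by
  refine le_of_pow_le_pow_left₀ two_ne_zero (by positivity) ?_
  rw [mul_pow, mul_pow, sq_sqrt (by positivity), ← exp_nat_mul, Nat.cast_ofNat,
    div_mul_eq_mul_div, div_mul_eq_mul_div, le_div_iff₀ hc₁]
  linarith

section

variable {E F : Type*} [NormedAddCommGroup E] [NormedSpace ℝ E] [NormedAddCommGroup F]
  [NormedSpace ℝ F]

theorem ContinuousLinearMap.apply_le_mul_of_norm_le (L : E →L[ℝ] ℝ) {x : E} {a b : ℝ}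
    (hL : ‖L‖ ≤ a) (hx : ‖x‖ ≤ b) : L x ≤ a * b :=
  calc L x ≤ ‖L x‖ := le_abs_self _
    _ ≤ ‖L‖ * ‖x‖ := L.le_opNorm x
    _ ≤ a * b := mul_le_mul hL hx (norm_nonneg _) ((norm_nonneg _).trans hL)

theorem le_of_sandwich_on_ball [Nontrivial E] {W : E → ℝ} {δ c₁ c₂ : ℝ} (hδ : 0 < δ)
    (hlow : ∀ w, ‖w‖ < δ → c₁ * ‖w‖ ^ 2 ≤ W w) (hup : ∀ w, ‖w‖ < δ → W w ≤ c₂ * ‖w‖ ^ 2) :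
    c₁ ≤ c₂ := by
  obtain ⟨w, hw⟩ := exists_norm_eq E (half_pos hδ).le
  have hwδ : ‖w‖ < δ := by rw [hw]; linarith
  have := (hlow w hwδ).trans (hup w hwδ)
  rw [hw] at this
  exact le_of_mul_le_mul_right this (by positivity)

theorem DifferentiableAt.hasDerivAt_comp_curve {V : E → F → ℝ → ℝ} {x : ℝ → E} {y : ℝ → F}
    {x' : E} {y' : F} {t : ℝ}
    (hV : DifferentiableAt ℝ (fun p : E × F × ℝ => V p.1 p.2.1 p.2.2) (x t, y t, t))
    (hx : HasDerivAt x x' t) (hy : HasDerivAt y y' t) :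
    HasDerivAt (fun s => V (x s) (y s) s)
      (deriv (fun s => V (x t) (y t) s) t + fderiv ℝ (fun a => V a (y t) t) (x t) x'
        + fderiv ℝ (fun b => V (x t) b t) (y t) y') t := by
  have hL := hV.hasFDerivAt
  set L := fderiv ℝ (fun p : E × F × ℝ => V p.1 p.2.1 p.2.2) (x t, y t, t)
  have hz : HasDerivAt (fun s => V (x t) (y t) s) (L (0, 0, 1)) t :=
    hL.comp_hasDerivAt (f := fun s => (x t, y t, s)) t ((hasDerivAt_const t (x t)).prodMk
      ((hasDerivAt_const t (y t)).prodMk (hasDerivAt_id t)))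
  have hw : HasFDerivAt (fun a => V a (y t) t) (L.comp (.inl ℝ E (F × ℝ))) (x t) :=
    hL.comp (f := fun a => (a, y t, t)) (x t) (hasFDerivAt_prodMk_left (x t) (y t, t))
  have hv : HasFDerivAt (fun b => V (x t) b t) (L.comp ((0 : F →L[ℝ] E).prod
      ((ContinuousLinearMap.id ℝ F).prod 0))) (y t) :=
    hL.comp (f := fun b => (x t, b, t)) (y t) ((hasFDerivAt_const (x t) (y t)).prodMk
      ((hasFDerivAt_id (y t)).prodMk (hasFDerivAt_const t (y t))))
  rw [hz.deriv, hw.fderiv, hv.fderiv]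
  refine (hL.comp_hasDerivAt (f := fun s => (x s, y s, s)) t
    (hx.prodMk (hy.prodMk (hasDerivAt_id t)))).congr_deriv ?_
  simp only [ContinuousLinearMap.comp_apply, ContinuousLinearMap.inl_apply,
    ContinuousLinearMap.prod_apply, ContinuousLinearMap.coe_id', id_eq,
    zero_apply, ← map_add, Prod.mk_add_mk, add_zero, zero_add]

structure IsPartialLyapunovFunction (V : E → F → ℝ → ℝ) (φ₁ : E → F → ℝ → E)
    (φ₂ : E → F → ℝ → F) (δ c₁ c₂ c₃ c₄ c₅ : ℝ) : Prop where
  differentiableAt : ∀ w : E, ‖w‖ < δ → ∀ (v : F) (z : ℝ),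
    DifferentiableAt ℝ (fun p : E × F × ℝ => V p.1 p.2.1 p.2.2) (w, v, z)
  lower : ∀ w : E, ‖w‖ < δ → ∀ (v : F) (z : ℝ), c₁ * ‖w‖ ^ 2 ≤ V w v z
  upper : ∀ w : E, ‖w‖ < δ → ∀ (v : F) (z : ℝ), V w v z ≤ c₂ * ‖w‖ ^ 2
  deriv_le : ∀ w : E, ‖w‖ < δ → ∀ (v : F) (z : ℝ),
    deriv (fun z' => V w v z') z + fderiv ℝ (fun w' => V w' v z) w (φ₁ w v z)
      + fderiv ℝ (fun v' => V w v' z) v (φ₂ w v z) ≤ -c₃ * ‖w‖ ^ 2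
  norm_fderiv_fst_le : ∀ w : E, ‖w‖ < δ → ∀ (v : F) (z : ℝ),
    ‖fderiv ℝ (fun w' => V w' v z) w‖ ≤ c₄ * ‖w‖
  norm_fderiv_snd_le : ∀ w : E, ‖w‖ < δ → ∀ (v : F) (z : ℝ),
    ‖fderiv ℝ (fun v' => V w v' z) v‖ ≤ c₅ * ‖w‖

namespace IsPartialLyapunovFunction

variable {V : E → F → ℝ → ℝ} {φ₁ : E → F → ℝ → E} {φ₂ : E → F → ℝ → F}
  {δ c₁ c₂ c₃ c₄ c₅ : ℝ}

theorem deriv_perturbed_le (hV : IsPartialLyapunovFunction V φ₁ φ₂ δ c₁ c₂ c₃ c₄ c₅)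
    (hc₁ : 0 < c₁) (hc₂ : 0 < c₂) (hc₃ : 0 ≤ c₃) (hc₄ : 0 ≤ c₄) (hc₅ : 0 ≤ c₅)
    {w : E} {v : F} {z γ₁ γ₂ : ℝ} {q₁ : E} {q₂ : F} (hw : ‖w‖ < δ) (hγ₁ : 0 ≤ γ₁)
    (hγ₂ : 0 ≤ γ₂) (hq₁ : ‖q₁‖ ≤ γ₁ * ‖w‖) (hq₂ : ‖q₂‖ ≤ γ₂ * ‖w‖) :
    deriv (fun z' => V w v z') z + fderiv ℝ (fun w' => V w' v z) w (φ₁ w v z + q₁)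
        + fderiv ℝ (fun v' => V w v' z) v (φ₂ w v z + q₂)
      ≤ ((c₄ * γ₁ + c₅ * γ₂) / c₁ - c₃ / c₂) * V w v z := by
  have h₁ := (fderiv ℝ (fun w' => V w' v z) w).apply_le_mul_of_norm_le
    (hV.norm_fderiv_fst_le w hw v z) hq₁
  have h₂ := (fderiv ℝ (fun v' => V w v' z) v).apply_le_mul_of_norm_le
    (hV.norm_fderiv_snd_le w hw v z) hq₂
  have hdecay := hV.deriv_le w hw v z
  have hnominal : -c₃ * ‖w‖ ^ 2 ≤ -(c₃ / c₂) * V w v z :=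
    calc -c₃ * ‖w‖ ^ 2 = -(c₃ / c₂) * (c₂ * ‖w‖ ^ 2) := by field_simp
      _ ≤ -(c₃ / c₂) * V w v z :=
        mul_le_mul_of_nonpos_left (hV.upper w hw v z) (by simp only [neg_nonpos]; positivity)
  have hperturbation : (c₄ * γ₁ + c₅ * γ₂) * ‖w‖ ^ 2 ≤ (c₄ * γ₁ + c₅ * γ₂) / c₁ * V w v z :=
    calc (c₄ * γ₁ + c₅ * γ₂) * ‖w‖ ^ 2 = (c₄ * γ₁ + c₅ * γ₂) / c₁ * (c₁ * ‖w‖ ^ 2) := by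
          field_simp
      _ ≤ (c₄ * γ₁ + c₅ * γ₂) / c₁ * V w v z :=
        mul_le_mul_of_nonneg_left (hV.lower w hw v z) (by positivity)
  rw [map_add, map_add]
  linarith

variable {g₁ : E → F → ℝ → E} {g₂ : E → F → ℝ → F} {γ₁ γ₂ : ℝ → ℝ}

theorem le_exp_integral_mul (hV : IsPartialLyapunovFunction V φ₁ φ₂ δ c₁ c₂ c₃ c₄ c₅)
    (hc₁ : 0 < c₁) (hc₂ : 0 < c₂) (hc₃ : 0 ≤ c₃) (hc₄ : 0 ≤ c₄) (hc₅ : 0 ≤ c₅)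
    (hγ₁ : Continuous γ₁) (hγ₂ : Continuous γ₂) (hγ₁0 : ∀ z, 0 ≤ γ₁ z) (hγ₂0 : ∀ z, 0 ≤ γ₂ z)
    (hg₁ : ∀ w v z, ‖g₁ w v z‖ ≤ γ₁ z * ‖w‖) (hg₂ : ∀ w v z, ‖g₂ w v z‖ ≤ γ₂ z * ‖w‖)
    {wp : ℝ → E} {vp : ℝ → F} {z₀ z : ℝ} (hz : z₀ ≤ z)
    (hwp : ∀ s ∈ Icc z₀ z, HasDerivAt wp (φ₁ (wp s) (vp s) s + g₁ (wp s) (vp s) s) s)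
    (hvp : ∀ s ∈ Icc z₀ z, HasDerivAt vp (φ₂ (wp s) (vp s) s + g₂ (wp s) (vp s) s) s)
    (hball : ∀ s ∈ Icc z₀ z, ‖wp s‖ < δ) :
    V (wp z) (vp z) z
      ≤ exp (∫ s in z₀..z, ((c₄ * γ₁ s + c₅ * γ₂ s) / c₁ - c₃ / c₂)) * V (wp z₀) (vp z₀) z₀ :=
  le_exp_integral_mul_of_hasDerivAt_le (by fun_prop) hz
    (fun s hs => (hV.differentiableAt _ (hball s hs) _ _).hasDerivAt_comp_curve (hwp s hs)
      (hvp s hs))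
    (fun s hs => hV.deriv_perturbed_le hc₁ hc₂ hc₃ hc₄ hc₅ (hball s hs) (hγ₁0 s) (hγ₂0 s)
      (hg₁ _ _ _) (hg₂ _ _ _))

theorem norm_le_of_forall_norm_lt (hV : IsPartialLyapunovFunction V φ₁ φ₂ δ c₁ c₂ c₃ c₄ c₅)
    (hc₁ : 0 < c₁) (hc₂ : 0 < c₂) (hc₃ : 0 ≤ c₃) (hc₄ : 0 ≤ c₄) (hc₅ : 0 ≤ c₅)
    (hγ₁ : Continuous γ₁) (hγ₂ : Continuous γ₂) (hγ₁0 : ∀ z, 0 ≤ γ₁ z) (hγ₂0 : ∀ z, 0 ≤ γ₂ z)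
    (hg₁ : ∀ w v z, ‖g₁ w v z‖ ≤ γ₁ z * ‖w‖) (hg₂ : ∀ w v z, ‖g₂ w v z‖ ≤ γ₂ z * ‖w‖)
    {wp : ℝ → E} {vp : ℝ → F} {z₀ z κ η : ℝ} (hz : z₀ ≤ z)
    (hwp : ∀ s ∈ Icc z₀ z, HasDerivAt wp (φ₁ (wp s) (vp s) s + g₁ (wp s) (vp s) s) s)
    (hvp : ∀ s ∈ Icc z₀ z, HasDerivAt vp (φ₂ (wp s) (vp s) s + g₂ (wp s) (vp s) s) s)
    (hball : ∀ s ∈ Icc z₀ z, ‖wp s‖ < δ)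
    (hint : c₄ * (∫ s in z₀..z, γ₁ s) + c₅ * (∫ s in z₀..z, γ₂ s) ≤ κ * (z - z₀) + η) :
    ‖wp z‖ ≤ exp (η / (2 * c₁)) * √(c₂ / c₁) * ‖wp z₀‖
      * exp (-(c₃ / (2 * c₂) - κ / (2 * c₁)) * (z - z₀)) := by
  have hball₀ := hball z₀ (left_mem_Icc.mpr hz)
  have hV₀ : 0 ≤ V (wp z₀) (vp z₀) z₀ := (by positivity : 0 ≤ c₁ * ‖wp z₀‖ ^ 2).trans
    (hV.lower _ hball₀ _ _)
  have hsq : c₁ * ‖wp z‖ ^ 2 ≤ exp (2 * (η / (2 * c₁) - (c₃ / (2 * c₂) - κ / (2 * c₁)) * (z - z₀)))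
      * (c₂ * ‖wp z₀‖ ^ 2) :=
    calc c₁ * ‖wp z‖ ^ 2 ≤ V (wp z) (vp z) z := hV.lower _ (hball z (right_mem_Icc.mpr hz)) _ _
      _ ≤ exp (∫ s in z₀..z, ((c₄ * γ₁ s + c₅ * γ₂ s) / c₁ - c₃ / c₂)) * V (wp z₀) (vp z₀) z₀ :=
        hV.le_exp_integral_mul hc₁ hc₂ hc₃ hc₄ hc₅ hγ₁ hγ₂ hγ₁0 hγ₂0 hg₁ hg₂ hz hwp hvp hball
      _ ≤ _ := mul_le_mul (exp_le_exp.mpr (integral_decay_rate_le hγ₁ hγ₂ hc₁ hint))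
        (hV.upper _ hball₀ _ _) hV₀ (exp_pos _).le
  calc ‖wp z‖ ≤ √(c₂ / c₁) * ‖wp z₀‖
        * exp (η / (2 * c₁) - (c₃ / (2 * c₂) - κ / (2 * c₁)) * (z - z₀)) :=
      le_sqrt_div_mul_mul_exp hc₁ hc₂.le (norm_nonneg _) hsq
    _ = _ := by rw [sub_eq_add_neg, exp_add, ← neg_mul]; ring

end IsPartialLyapunovFunction

end

theorem stmt_4_general {n m : ℕ} (δ c₁ c₂ c₃ c₄ c₅ κ η k₁ k₂ : ℝ)
    (hδ : 0 < δ) (hc₁ : 0 < c₁) (hc₂ : 0 < c₂) (hc₃ : 0 < c₃) (hc₄ : 0 < c₄)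
    (hc₅ : 0 < c₅) (hκ : κ < c₁ * c₃ / c₂) (hη : 0 ≤ η)
    (hk₁ : k₁ = c₃ / (2 * c₂) - κ / (2 * c₁))
    (hk₂ : k₂ = Real.exp (η / (2 * c₁)))
    (φ₁ : EuclideanSpace ℝ (Fin n) → EuclideanSpace ℝ (Fin m) → ℝ → EuclideanSpace ℝ (Fin n))
    (φ₂ : EuclideanSpace ℝ (Fin n) → EuclideanSpace ℝ (Fin m) → ℝ → EuclideanSpace ℝ (Fin m))
    (g₁ : EuclideanSpace ℝ (Fin n) → EuclideanSpace ℝ (Fin m) → ℝ → EuclideanSpace ℝ (Fin n))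
    (g₂ : EuclideanSpace ℝ (Fin n) → EuclideanSpace ℝ (Fin m) → ℝ → EuclideanSpace ℝ (Fin m))
    -- the Lyapunov function of the nominal system
    (V : EuclideanSpace ℝ (Fin n) → EuclideanSpace ℝ (Fin m) → ℝ → ℝ)
    (hVdiff : ∀ (w : EuclideanSpace ℝ (Fin n)), ‖w‖ < δ →
      ∀ (v : EuclideanSpace ℝ (Fin m)) (z : ℝ),
        DifferentiableAt ℝ
          (fun p : EuclideanSpace ℝ (Fin n) × EuclideanSpace ℝ (Fin m) × ℝ =>
            V p.1 p.2.1 p.2.2) (w, v, z))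
    (hVlow : ∀ (w : EuclideanSpace ℝ (Fin n)), ‖w‖ < δ →
      ∀ (v : EuclideanSpace ℝ (Fin m)) (z : ℝ), c₁ * ‖w‖^2 ≤ V w v z)
    (hVup : ∀ (w : EuclideanSpace ℝ (Fin n)), ‖w‖ < δ →
      ∀ (v : EuclideanSpace ℝ (Fin m)) (z : ℝ), V w v z ≤ c₂ * ‖w‖^2)
    (hVdecay : ∀ (w : EuclideanSpace ℝ (Fin n)), ‖w‖ < δ →
      ∀ (v : EuclideanSpace ℝ (Fin m)) (z : ℝ),
        deriv (fun z' => V w v z') z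
            + fderiv ℝ (fun w' => V w' v z) w (φ₁ w v z)
            + fderiv ℝ (fun v' => V w v' z) v (φ₂ w v z) ≤ -c₃ * ‖w‖^2)
    (hVw : ∀ (w : EuclideanSpace ℝ (Fin n)), ‖w‖ < δ →
      ∀ (v : EuclideanSpace ℝ (Fin m)) (z : ℝ),
        ‖fderiv ℝ (fun w' => V w' v z) w‖ ≤ c₄ * ‖w‖)
    (hVv : ∀ (w : EuclideanSpace ℝ (Fin n)), ‖w‖ < δ →
      ∀ (v : EuclideanSpace ℝ (Fin m)) (z : ℝ),
        ‖fderiv ℝ (fun v' => V w v' z) v‖ ≤ c₅ * ‖w‖)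
    -- the perturbation bounds
    (γ₁ γ₂ : ℝ → ℝ)
    (hγ₁cont : Continuous γ₁) (hγ₂cont : Continuous γ₂)
    (hγ₁pos : ∀ z, 0 ≤ γ₁ z) (hγ₂pos : ∀ z, 0 ≤ γ₂ z)
    (hg₁ : ∀ w v z, ‖g₁ w v z‖ ≤ γ₁ z * ‖w‖)
    (hg₂ : ∀ w v z, ‖g₂ w v z‖ ≤ γ₂ z * ‖w‖) :
    ∀ z₀ : ℝ,
      (∀ z ≥ z₀, c₄ * (∫ τ in z₀..z, γ₁ τ) + c₅ * (∫ τ in z₀..z, γ₂ τ)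
          ≤ κ * (z - z₀) + η) →
      ∀ (wp : ℝ → EuclideanSpace ℝ (Fin n)) (vp : ℝ → EuclideanSpace ℝ (Fin m)),
        (∀ z ≥ z₀, HasDerivAt wp (φ₁ (wp z) (vp z) z + g₁ (wp z) (vp z) z) z) →
        (∀ z ≥ z₀, HasDerivAt vp (φ₂ (wp z) (vp z) z + g₂ (wp z) (vp z) z) z) →
        ‖wp z₀‖ < (δ / k₂) * Real.sqrt (c₁ / c₂) →
        ∀ z ≥ z₀,
          ‖wp z‖ ≤ k₂ * Real.sqrt (c₂ / c₁) * ‖wp z₀‖ * Real.exp (-k₁ * (z - z₀)) := by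
  intro z₀ hint wp vp hwp hvp hinit
  subst hk₁ hk₂
  have hV : IsPartialLyapunovFunction V φ₁ φ₂ δ c₁ c₂ c₃ c₄ c₅ :=
    ⟨hVdiff, hVlow, hVup, hVdecay, hVw, hVv⟩
  have hbound (z : ℝ) (hz : z ≥ z₀) (hball : ∀ s ∈ Icc z₀ z, ‖wp s‖ < δ) :=
    hV.norm_le_of_forall_norm_lt hc₁ hc₂ hc₃.le hc₄.le hc₅.le hγ₁cont hγ₂cont hγ₁pos hγ₂pos
      hg₁ hg₂ hz (fun s hs => hwp s hs.1) (fun s hs => hvp s hs.1) hball (hint z hz)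
  have hrate : 0 < c₃ / (2 * c₂) - κ / (2 * c₁) := by
    rw [sub_pos, div_lt_div_iff₀ (by positivity) (by positivity)]
    rw [lt_div_iff₀ hc₂] at hκ
    nlinarith
  have hB : exp (η / (2 * c₁)) * √(c₂ / c₁) * ‖wp z₀‖ < δ :=
    calc _ < exp (η / (2 * c₁)) * √(c₂ / c₁) * (δ / exp (η / (2 * c₁)) * √(c₁ / c₂)) :=
          mul_lt_mul_of_pos_left hinit (by positivity)
      _ = δ := by
        rw [show √(c₂ / c₁) = (√(c₁ / c₂))⁻¹ by rw [← sqrt_inv, inv_div]]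
        field_simp
  have hw₀ : ‖wp z₀‖ < δ := by
    rcases eq_or_ne (wp z₀) 0 with h | h
    · simpa [h] using hδ
    have : Nontrivial (EuclideanSpace ℝ (Fin n)) := nontrivial_of_ne _ _ h
    have hc : c₁ ≤ c₂ :=
      le_of_sandwich_on_ball hδ (fun w hw => hVlow w hw 0 0) (fun w hw => hVup w hw 0 0)
    refine (le_mul_of_one_le_left (norm_nonneg _) ?_).trans_lt hB
    exact one_le_mul_of_one_le_of_one_le (one_le_exp (by positivity))
      (one_le_sqrt.mpr ((one_le_div hc₁).mpr hc))
  have hstay := forall_lt_of_continuousOn_of_bound hB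
    (fun z hz => (hwp z hz).continuousAt.norm.continuousWithinAt) hw₀
    fun z hz hball => (hbound z hz hball).trans
      (mul_le_of_le_one_right (by positivity) (exp_le_one_iff.mpr (by nlinarith)))
  exact fun z hz => hbound z hz fun s hs => hstay s hs.1

/-- Vanishing-perturbation corollary: under the hypotheses of the perturbation
theorem with ψ₁ ≡ 0 and ψ₂ ≡ 0 (i.e. ‖gᵢ‖ ≤ γᵢ(z)‖w_p‖), the origin w_p = 0 of the
perturbed system is partially exponentially stable uniformly in v_p: every solution
with ‖w_p(z₀)‖ < (δ/k₂)√(c₁/c₂) satisfies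
‖w_p(z)‖ ≤ k₂√(c₂/c₁)‖w_p(z₀)‖e^{−k₁(z−z₀)} for all z ≥ z₀, where
k₁ = c₃/(2c₂) − κ/(2c₁) and k₂ = exp(η/(2c₁)). -/
theorem stmt_4 {n m : ℕ} (δ c₁ c₂ c₃ c₄ c₅ κ η k₁ k₂ : ℝ)
    (hδ : 0 < δ) (hc₁ : 0 < c₁) (hc₂ : 0 < c₂) (hc₃ : 0 < c₃) (hc₄ : 0 < c₄)
    (hc₅ : 0 < c₅) (hκ0 : 0 ≤ κ) (hκ : κ < c₁ * c₃ / c₂) (hη : 0 ≤ η)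
    (hk₁ : k₁ = c₃ / (2 * c₂) - κ / (2 * c₁))
    (hk₂ : k₂ = Real.exp (η / (2 * c₁)))
    (φ₁ : EuclideanSpace ℝ (Fin n) → EuclideanSpace ℝ (Fin m) → ℝ → EuclideanSpace ℝ (Fin n))
    (φ₂ : EuclideanSpace ℝ (Fin n) → EuclideanSpace ℝ (Fin m) → ℝ → EuclideanSpace ℝ (Fin m))
    (g₁ : EuclideanSpace ℝ (Fin n) → EuclideanSpace ℝ (Fin m) → ℝ → EuclideanSpace ℝ (Fin n))
    (g₂ : EuclideanSpace ℝ (Fin n) → EuclideanSpace ℝ (Fin m) → ℝ → EuclideanSpace ℝ (Fin m))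
    (hφ₁ : ContDiff ℝ 1
      (fun p : EuclideanSpace ℝ (Fin n) × EuclideanSpace ℝ (Fin m) × ℝ => φ₁ p.1 p.2.1 p.2.2))
    (hφ₂ : ContDiff ℝ 1
      (fun p : EuclideanSpace ℝ (Fin n) × EuclideanSpace ℝ (Fin m) × ℝ => φ₂ p.1 p.2.1 p.2.2))
    (heq₁ : ∀ v z, φ₁ 0 v z = 0)
    (heq₂ : ∀ v z, φ₂ 0 v z = 0)
    -- the Lyapunov function of the nominal system
    (V : EuclideanSpace ℝ (Fin n) → EuclideanSpace ℝ (Fin m) → ℝ → ℝ)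
    (hVdiff : ∀ (w : EuclideanSpace ℝ (Fin n)), ‖w‖ < δ →
      ∀ (v : EuclideanSpace ℝ (Fin m)) (z : ℝ),
        DifferentiableAt ℝ
          (fun p : EuclideanSpace ℝ (Fin n) × EuclideanSpace ℝ (Fin m) × ℝ =>
            V p.1 p.2.1 p.2.2) (w, v, z))
    (hVlow : ∀ (w : EuclideanSpace ℝ (Fin n)), ‖w‖ < δ →
      ∀ (v : EuclideanSpace ℝ (Fin m)) (z : ℝ), c₁ * ‖w‖^2 ≤ V w v z)
    (hVup : ∀ (w : EuclideanSpace ℝ (Fin n)), ‖w‖ < δ →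
      ∀ (v : EuclideanSpace ℝ (Fin m)) (z : ℝ), V w v z ≤ c₂ * ‖w‖^2)
    (hVdecay : ∀ (w : EuclideanSpace ℝ (Fin n)), ‖w‖ < δ →
      ∀ (v : EuclideanSpace ℝ (Fin m)) (z : ℝ),
        deriv (fun z' => V w v z') z
            + fderiv ℝ (fun w' => V w' v z) w (φ₁ w v z)
            + fderiv ℝ (fun v' => V w v' z) v (φ₂ w v z) ≤ -c₃ * ‖w‖^2)
    (hVw : ∀ (w : EuclideanSpace ℝ (Fin n)), ‖w‖ < δ →
      ∀ (v : EuclideanSpace ℝ (Fin m)) (z : ℝ),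
        ‖fderiv ℝ (fun w' => V w' v z) w‖ ≤ c₄ * ‖w‖)
    (hVv : ∀ (w : EuclideanSpace ℝ (Fin n)), ‖w‖ < δ →
      ∀ (v : EuclideanSpace ℝ (Fin m)) (z : ℝ),
        ‖fderiv ℝ (fun v' => V w v' z) v‖ ≤ c₅ * ‖w‖)
    -- the perturbation bounds
    (γ₁ γ₂ : ℝ → ℝ)
    (hγ₁cont : Continuous γ₁) (hγ₂cont : Continuous γ₂)
    (hγ₁pos : ∀ z, 0 ≤ γ₁ z) (hγ₂pos : ∀ z, 0 ≤ γ₂ z)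
    (hg₁ : ∀ w v z, ‖g₁ w v z‖ ≤ γ₁ z * ‖w‖)
    (hg₂ : ∀ w v z, ‖g₂ w v z‖ ≤ γ₂ z * ‖w‖) :
    ∀ z₀ : ℝ,
      (∀ z ≥ z₀, c₄ * (∫ τ in z₀..z, γ₁ τ) + c₅ * (∫ τ in z₀..z, γ₂ τ)
          ≤ κ * (z - z₀) + η) →
      ∀ (wp : ℝ → EuclideanSpace ℝ (Fin n)) (vp : ℝ → EuclideanSpace ℝ (Fin m)),
        (∀ z ≥ z₀, HasDerivAt wp (φ₁ (wp z) (vp z) z + g₁ (wp z) (vp z) z) z) →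
        (∀ z ≥ z₀, HasDerivAt vp (φ₂ (wp z) (vp z) z + g₂ (wp z) (vp z) z) z) →
        ‖wp z₀‖ < (δ / k₂) * Real.sqrt (c₁ / c₂) →
        ∀ z ≥ z₀,
          ‖wp z‖ ≤ k₂ * Real.sqrt (c₂ / c₁) * ‖wp z₀‖ * Real.exp (-k₁ * (z - z₀)) :=
  stmt_4_general δ c₁ c₂ c₃ c₄ c₅ κ η k₁ k₂ hδ hc₁ hc₂ hc₃ hc₄ hc₅ hκ hη hk₁ hk₂ φ₁ φ₂ g₁ g₂ V
    hVdiff hVlow hVup hVdecay hVw hVv γ₁ γ₂ hγ₁cont hγ₂cont hγ₁pos hγ₂pos hg₁ hg₂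
end

section
/- For the Kuramoto–Sakaguchi star network θ̇ᵢ = ω + A sin(θ₀ − θᵢ − α) for i = 1,2 and θ̇₀ = ω + Σ_{j=1}^{2} A sin(θⱼ − θ₀ − α), with equal coupling strengths A₁ = A₂ = A > 0, zero detuning u = 0, and phase shift α ∈ (0, π/2): if α > arctan(√3), then there exists no exponentially stable remote synchronization manifold contained in M = {θ ∈ 𝕊³ : θ₁ = θ₂}; in particular both positively invariant manifolds M₁ = {θ₁ = θ₂, θ₀ − θ₁ = c(α)} and M₁' = {θ₁ = θ₂, θ₀ − θ₁ = π + c(α)}, with c(α) = −arctan(sin α/(3 cos α)), are unstable. -/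
open Real

/-- c(α) = −arctan(sin α / (3 cos α)). -/
noncomputable def cAlpha (α : ℝ) : ℝ := -Real.arctan (Real.sin α / (3 * Real.cos α))

/-- The point (θ₀(t), θ₁(t), θ₂(t)) viewed in ℝ³ (Euclidean). -/
noncomputable def trajPt (θ0 θ1 θ2 : ℝ → ℝ) (t : ℝ) : EuclideanSpace ℝ (Fin 3) :=
  WithLp.toLp 2 ![θ0 t, θ1 t, θ2 t]

/-- Solutions of the Kuramoto–Sakaguchi star network with coupling A, phase shift α,
natural frequency ω and detuning u of the central oscillator 0. -/
def IsSol (A α ω u : ℝ) (θ0 θ1 θ2 : ℝ → ℝ) : Prop :=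
  (∀ t ≥ (0:ℝ), HasDerivAt θ1 (ω + A * Real.sin (θ0 t - θ1 t - α)) t) ∧
  (∀ t ≥ (0:ℝ), HasDerivAt θ2 (ω + A * Real.sin (θ0 t - θ2 t - α)) t) ∧
  (∀ t ≥ (0:ℝ), HasDerivAt θ0
    (ω + (A * Real.sin (θ1 t - θ0 t - α) + A * Real.sin (θ2 t - θ0 t - α)) + u) t)

/-- The remote synchronization manifold M = {θ₁ = θ₂ (mod 2π)}, as a (2π-periodic)
subset of ℝ³ representing a subset of the torus 𝕊³. -/
def Msync : Set (EuclideanSpace ℝ (Fin 3)) :=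
  {θ | ∃ k : ℤ, θ 1 - θ 2 = 2 * π * (k : ℝ)}

/-- The phase-locked remote synchronization manifold M₁ = {θ₁ = θ₂, θ₀ − θ₁ = c(α)}. -/
def M1 (α : ℝ) : Set (EuclideanSpace ℝ (Fin 3)) :=
  {θ | (∃ k : ℤ, θ 1 - θ 2 = 2 * π * (k : ℝ)) ∧
       (∃ k : ℤ, θ 0 - θ 1 = cAlpha α + 2 * π * (k : ℝ))}

/-- The phase-locked remote synchronization manifold M₁' = {θ₁ = θ₂, θ₀ − θ₁ = π + c(α)}. -/
def M1' (α : ℝ) : Set (EuclideanSpace ℝ (Fin 3)) :=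
  {θ | (∃ k : ℤ, θ 1 - θ 2 = 2 * π * (k : ℝ)) ∧
       (∃ k : ℤ, θ 0 - θ 1 = π + cAlpha α + 2 * π * (k : ℝ))}

/-- N is exponentially stable along the dynamics. -/
def ExpStable (A α ω u : ℝ) (N : Set (EuclideanSpace ℝ (Fin 3))) : Prop :=
  ∃ δ > (0:ℝ), ∃ k > (0:ℝ), ∃ lam > (0:ℝ),
    ∀ θ0 θ1 θ2 : ℝ → ℝ, IsSol A α ω u θ0 θ1 θ2 →
      Metric.infDist (trajPt θ0 θ1 θ2 0) N < δ →
      ∀ t ≥ (0:ℝ),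
        Metric.infDist (trajPt θ0 θ1 θ2 t) N ≤
          k * Metric.infDist (trajPt θ0 θ1 θ2 0) N * Real.exp (-lam * t)

/-- N is positively invariant along the dynamics. -/
def PosInvariant (A α ω u : ℝ) (N : Set (EuclideanSpace ℝ (Fin 3))) : Prop :=
  ∀ θ0 θ1 θ2 : ℝ → ℝ, IsSol A α ω u θ0 θ1 θ2 →
    trajPt θ0 θ1 θ2 0 ∈ N → ∀ t ≥ (0:ℝ), trajPt θ0 θ1 θ2 t ∈ N


/-!
Put `c = cAlpha α`; it is chosen so that `sin (c - α) + 2 sin (c + α) = 0`. Then the network has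
two explicit families of solutions in which the lag `d = θ₀ - θ₁ - c` obeys `d' = K sin d`, solved
by `d = 2 arctan (C e^{K t})`: a transverse family with `θ₂ - θ₁ = 2 d` and `K = -A cos (c - α)`,
and a synchronized family with `θ₂ = θ₁` and `K = -A (cos (c - α) + 2 cos (c + α))`. The second
`K` is always negative, and for `α > π / 3` the first one is positive.

If `N ⊆ M` contains points whose lag is close to `c`, transverse solutions started next to them
reach `θ₁ - θ₂ ≡ π`, at distance `π / 2` from `M`. Otherwise synchronized solutions started next to
any point of `N` drive the lag to `c`, hence away from `N`. Either way some solutions starting close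
to `N` end up farther from it than exponential stability allows.
-/

open Filter Topology Metric

@[simp] lemma trajPt_apply_zero (θ0 θ1 θ2 : ℝ → ℝ) (t : ℝ) : trajPt θ0 θ1 θ2 t 0 = θ0 t := rfl
@[simp] lemma trajPt_apply_one (θ0 θ1 θ2 : ℝ → ℝ) (t : ℝ) : trajPt θ0 θ1 θ2 t 1 = θ1 t := rfl
@[simp] lemma trajPt_apply_two (θ0 θ1 θ2 : ℝ → ℝ) (t : ℝ) : trajPt θ0 θ1 θ2 t 2 = θ2 t := rfl

section Geometry

variable {ι : Type*} [Fintype ι]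

lemma abs_sub_sub_le_two_mul_dist (x y : EuclideanSpace ℝ ι) (i j : ι) :
    |(x i - x j) - (y i - y j)| ≤ 2 * dist x y := by
  have hi : |x i - y i| ≤ dist x y := by simpa [Real.dist_eq] using PiLp.dist_apply_le x y i
  have hj : |x j - y j| ≤ dist x y := by simpa [Real.dist_eq] using PiLp.dist_apply_le x y j
  calc |(x i - x j) - (y i - y j)| = |(x i - y i) - (x j - y j)| := by congr 1; ring
    _ ≤ |x i - y i| + |x j - y j| := abs_sub _ _
    _ ≤ 2 * dist x y := by linarith

lemma dist_le_sum_abs_sub (x y : EuclideanSpace ℝ ι) : dist x y ≤ ∑ i, |x i - y i| := by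
  rw [EuclideanSpace.dist_eq, Real.sqrt_le_left (by positivity)]
  simpa only [Real.dist_eq, sq_abs] using
    Finset.sum_sq_le_sq_sum_of_nonneg fun i _ => abs_nonneg (x i - y i)

end Geometry

lemma half_pi_le_infDist_Msync {x : EuclideanSpace ℝ (Fin 3)} {m : ℤ}
    (hx : x 1 - x 2 = π + 2 * π * m) : π / 2 ≤ infDist x Msync := by
  have hM : Msync.Nonempty := ⟨0, 0, by simp⟩
  refine (le_infDist hM).2 fun n ⟨z, hz⟩ => ?_
  have hodd : (1 : ℝ) ≤ |((2 * (m - z) + 1 : ℤ) : ℝ)| := by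
    exact_mod_cast Int.one_le_abs (by omega)
  have hlag := abs_sub_sub_le_two_mul_dist x n 1 2
  rw [hx, hz, show π + 2 * π * m - 2 * π * z = π * ((2 * (m - z) + 1 : ℤ) : ℝ) by push_cast; ring,
    abs_mul, abs_of_pos pi_pos] at hlag
  nlinarith [pi_pos]

lemma exists_int_abs_sub_two_pi_mul_le (r : ℝ) : ∃ j : ℤ, |r - 2 * π * j| ≤ π := by
  refine ⟨round (r / (2 * π)), ?_⟩
  have h := abs_sub_round (r / (2 * π))
  rw [show r - 2 * π * round (r / (2 * π)) = 2 * π * (r / (2 * π) - round (r / (2 * π))) by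
    field_simp, abs_mul, abs_of_pos two_pi_pos]
  nlinarith [pi_pos]

lemma exists_abs_lt_pi_abs_sub_le {w ξ : ℝ} (hw : |w| ≤ π) (hξ : 0 < ξ) :
    ∃ v, |v| < π ∧ |v - w| ≤ ξ := by
  set s := min (1 / 2) (ξ / π)
  have hs : 0 < s := lt_min one_half_pos (div_pos hξ pi_pos)
  have hsξ : s * π ≤ ξ := (le_div_iff₀ pi_pos).1 (min_le_right _ _)
  refine ⟨(1 - s) * w, ?_, ?_⟩
  · have hs1 : 0 < 1 - s := by linarith [min_le_left (1 / 2) (ξ / π)]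
    rw [abs_mul, abs_of_pos hs1]
    nlinarith [mul_le_mul_of_nonneg_left hw hs1.le, pi_pos]
  · rw [show (1 - s) * w - w = -(s * w) by ring, abs_neg, abs_mul, abs_of_pos hs]
    nlinarith

lemma arctan_le_self {x : ℝ} (hx : 0 ≤ x) : arctan x ≤ x := by
  simpa only [tan_arctan] using le_tan (arctan_nonneg.2 hx) (arctan_lt_pi_div_two x)

noncomputable def angleFlow (C K t : ℝ) : ℝ := 2 * arctan (C * exp (K * t))

lemma hasDerivAt_angleFlow (C K t : ℝ) :
    HasDerivAt (angleFlow C K) (K * sin (angleFlow C K t)) t := by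
  have h := (((hasDerivAt_id t).const_mul K).exp.const_mul C).arctan.const_mul 2
  simp only [id, mul_one] at h
  refine h.congr_deriv ?_
  rw [angleFlow, sin_two_mul, sin_arctan, cos_arctan]
  field_simp
  rw [Real.sq_sqrt (by positivity)]

lemma angleFlow_zero (C K : ℝ) : angleFlow C K 0 = 2 * arctan C := by simp [angleFlow]

lemma angleFlow_log_inv_div {C K : ℝ} (hC : 0 < C) (hK : K ≠ 0) :
    angleFlow C K (log C⁻¹ / K) = π / 2 := by
  rw [angleFlow, mul_div_cancel₀ _ hK, exp_log (inv_pos.2 hC), mul_inv_cancel₀ hC.ne',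
    arctan_one]
  ring

lemma tendsto_angleFlow_atTop (C : ℝ) {K : ℝ} (hK : K < 0) :
    Tendsto (angleFlow C K) atTop (𝓝 0) := by
  have h : Tendsto (fun t => exp (K * t)) atTop (𝓝 0) :=
    tendsto_exp_atBot.comp (tendsto_id.const_mul_atTop_of_neg hK)
  have h2 := ((continuous_arctan.tendsto _).comp (h.const_mul C)).const_mul 2
  rw [mul_zero, arctan_zero, mul_zero] at h2
  exact h2

noncomputable def leafPhase (A α ω c : ℝ) (d : ℝ → ℝ) (t : ℝ) : ℝ :=
  ∫ s in (0 : ℝ)..t, (ω + A * sin (c + d s - α))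

lemma hasDerivAt_leafPhase {A α ω c : ℝ} {d : ℝ → ℝ} (hd : Continuous d) (t : ℝ) :
    HasDerivAt (leafPhase A α ω c d) (ω + A * sin (c + d t - α)) t :=
  (Continuous.integral_hasStrictDerivAt (by fun_prop) 0 t).hasDerivAt

lemma leafPhase_zero (A α ω c : ℝ) (d : ℝ → ℝ) : leafPhase A α ω c d 0 = 0 :=
  intervalIntegral.integral_same

section Solutions

variable {A α ω c : ℝ} {d : ℝ → ℝ}

lemma IsSol.translate {u : ℝ} {θ0 θ1 θ2 : ℝ → ℝ} (h : IsSol A α ω u θ0 θ1 θ2) (b : ℝ)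
    (j0 j1 j2 : ℤ) :
    IsSol A α ω u (fun t => θ0 t + (b + 2 * π * j0)) (fun t => θ1 t + (b + 2 * π * j1))
      (fun t => θ2 t + (b + 2 * π * j2)) := by
  have hsin : ∀ (x y : ℝ) (i j : ℤ),
      sin (x + (b + 2 * π * i) - (y + (b + 2 * π * j)) - α) = sin (x - y - α) := fun x y i j => by
    rw [show x + (b + 2 * π * i) - (y + (b + 2 * π * j)) - α = x - y - α + (i - j : ℤ) * (2 * π) by
      push_cast; ring, sin_add_int_mul_two_pi]
  obtain ⟨h1, h2, h0⟩ := h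
  exact ⟨fun t ht => by simpa only [hsin] using (h1 t ht).add_const _,
    fun t ht => by simpa only [hsin] using (h2 t ht).add_const _,
    fun t ht => by simpa only [hsin] using (h0 t ht).add_const _⟩

theorem isSol_transverse (hc : sin (c - α) + 2 * sin (c + α) = 0)
    (hd : ∀ t, HasDerivAt d (-(A * cos (c - α)) * sin (d t)) t) :
    IsSol A α ω 0 (fun t => leafPhase A α ω c d t + (c + d t)) (leafPhase A α ω c d)
      (fun t => leafPhase A α ω c d t + 2 * d t) := by
  have hφ := hasDerivAt_leafPhase (A := A) (α := α) (ω := ω) (c := c)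
    (Differentiable.continuous fun t => (hd t).differentiableAt)
  set φ := leafPhase A α ω c d
  refine ⟨fun t _ => (hφ t).congr_deriv (by ring_nf), fun t _ => ?_, fun t _ => ?_⟩
  · refine ((hφ t).add ((hd t).const_mul 2)).congr_deriv ?_
    rw [show φ t + (c + d t) - (φ t + 2 * d t) - α = c - α - d t by ring,
      show c + d t - α = c - α + d t by ring, sin_sub, sin_add]
    ring
  · refine ((hφ t).add ((hd t).const_add c)).congr_deriv ?_
    beta_reduce
    rw [show φ t - (φ t + (c + d t)) - α = -(c + α + d t) by ring,
      show φ t + 2 * d t - (φ t + (c + d t)) - α = -(c + α - d t) by ring,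
      show c + d t - α = c - α + d t by ring, sin_neg, sin_neg, sin_add (c + α), sin_add (c - α),
      sin_sub (c + α)]
    linear_combination A * cos (d t) * hc

theorem isSol_synchronized (hc : sin (c - α) + 2 * sin (c + α) = 0)
    (hd : ∀ t, HasDerivAt d (-(A * (cos (c - α) + 2 * cos (c + α))) * sin (d t)) t) :
    IsSol A α ω 0 (fun t => leafPhase A α ω c d t + (c + d t)) (leafPhase A α ω c d)
      (leafPhase A α ω c d) := by
  have hφ := hasDerivAt_leafPhase (A := A) (α := α) (ω := ω) (c := c)
    (Differentiable.continuous fun t => (hd t).differentiableAt)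
  set φ := leafPhase A α ω c d
  refine ⟨fun t _ => (hφ t).congr_deriv (by ring_nf), fun t _ => (hφ t).congr_deriv (by ring_nf),
    fun t _ => ?_⟩
  refine ((hφ t).add ((hd t).const_add c)).congr_deriv ?_
  beta_reduce
  rw [show φ t - (φ t + (c + d t)) - α = -(c + α + d t) by ring,
    show c + d t - α = c - α + d t by ring, sin_neg, sin_add, sin_add]
  linear_combination A * cos (d t) * hc

end Solutions

section CAlpha

variable {α : ℝ}

lemma sin_cAlpha_sub_add_two_mul_sin_cAlpha_add (hα : cos α ≠ 0) :
    sin (cAlpha α - α) + 2 * sin (cAlpha α + α) = 0 := by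
  rw [sin_sub, sin_add, cAlpha, sin_neg, cos_neg, sin_arctan, cos_arctan]
  field_simp
  ring

lemma cos_cAlpha_sub_neg (hα : 0 < cos α) (hα' : cos α < 1 / 2) : cos (cAlpha α - α) < 0 := by
  set S := sin α / (3 * cos α)
  have hS : cos α - S * sin α = (4 * cos α ^ 2 - 1) / (3 * cos α) := by
    simp only [S]
    field_simp
    linear_combination -sin_sq_add_cos_sq α
  have hneg : cos α - S * sin α < 0 := by
    rw [hS]
    exact div_neg_of_neg_of_pos (by nlinarith) (by positivity)
  rw [cos_sub, cAlpha, sin_neg, cos_neg, sin_arctan, cos_arctan]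
  calc 1 / √(1 + S ^ 2) * cos α + -(S / √(1 + S ^ 2)) * sin α
      = (cos α - S * sin α) / √(1 + S ^ 2) := by ring
    _ < 0 := div_neg_of_neg_of_pos hneg (by positivity)

lemma cos_cAlpha_sub_add_two_mul_cos_cAlpha_add_pos (hα : 0 < cos α) :
    0 < cos (cAlpha α - α) + 2 * cos (cAlpha α + α) := by
  set S := sin α / (3 * cos α)
  have hS : 0 ≤ S * sin α := by
    simp only [S]
    rw [div_mul_eq_mul_div, ← sq]
    positivity
  rw [cos_sub, cos_add, cAlpha, sin_neg, cos_neg, sin_arctan, cos_arctan]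
  calc 0 < (3 * cos α + S * sin α) / √(1 + S ^ 2) := by positivity
    _ = _ := by ring

end CAlpha

lemma ExpStable.exists_infDist_le_mul {A α ω u : ℝ} {N : Set (EuclideanSpace ℝ (Fin 3))}
    (h : ExpStable A α ω u N) :
    ∃ δ > 0, ∃ k > 0, ∀ θ0 θ1 θ2 : ℝ → ℝ, IsSol A α ω u θ0 θ1 θ2 →
      infDist (trajPt θ0 θ1 θ2 0) N < δ → ∀ t ≥ 0,
        infDist (trajPt θ0 θ1 θ2 t) N ≤ k * infDist (trajPt θ0 θ1 θ2 0) N := by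
  obtain ⟨δ, hδ, k, hk, lam, hlam, H⟩ := h
  refine ⟨δ, hδ, k, hk, fun θ0 θ1 θ2 hsol h0 t ht => (H θ0 θ1 θ2 hsol h0 t ht).trans ?_⟩
  exact mul_le_of_le_one_right (mul_nonneg hk.le infDist_nonneg) (exp_le_one_iff.2 (by nlinarith))

section Instability

variable {A α ω c : ℝ}

theorem exists_isSol_escaping_Msync (hA : 0 < A) (hc : sin (c - α) + 2 * sin (c + α) = 0)
    (hcos : cos (c - α) < 0) {q : EuclideanSpace ℝ (Fin 3)} (hq : q ∈ Msync) (j : ℤ) {η : ℝ}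
    (hη : 0 < η) :
    ∃ θ0 θ1 θ2 : ℝ → ℝ, IsSol A α ω 0 θ0 θ1 θ2 ∧
      dist (trajPt θ0 θ1 θ2 0) q ≤ |q 0 - q 1 - c - 2 * π * j| + η ∧
      ∃ t ≥ 0, π / 2 ≤ infDist (trajPt θ0 θ1 θ2 t) Msync := by
  obtain ⟨m, hm⟩ := hq
  set K := -(A * cos (c - α))
  have hK : 0 < K := neg_pos.2 (mul_neg_of_pos_of_neg hA hcos)
  set C := min 1 (η / 6)
  have hC : 0 < C := lt_min one_pos (by positivity)
  have hC1 : C ≤ 1 := min_le_left _ _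
  have hCη : C ≤ η / 6 := min_le_right _ _
  have hd0 : 0 ≤ angleFlow C K 0 ∧ angleFlow C K 0 ≤ 2 * C := by
    rw [angleFlow_zero]
    exact ⟨by linarith [arctan_nonneg.2 hC.le], by linarith [arctan_le_self hC.le]⟩
  refine ⟨_, _, _, (isSol_transverse hc (hasDerivAt_angleFlow C K)).translate (q 1) j 0 (-m), ?_,
    log C⁻¹ / K, div_nonneg (log_nonneg (one_le_inv_iff₀.2 ⟨hC, hC1⟩)) hK.le,
    half_pi_le_infDist_Msync (m := m - 1) ?_⟩
  · refine (dist_le_sum_abs_sub _ _).trans ?_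
    simp only [Fin.sum_univ_three, trajPt_apply_zero, trajPt_apply_one, trajPt_apply_two,
      leafPhase_zero]
    obtain ⟨hd0, hd0C⟩ := hd0
    set d₀ := angleFlow C K 0
    have hlag := abs_sub d₀ (q 0 - q 1 - c - 2 * π * j)
    rw [show 0 + (c + d₀) + (q 1 + 2 * π * j) - q 0 = d₀ - (q 0 - q 1 - c - 2 * π * j) by ring,
      show 0 + (q 1 + 2 * π * ((0 : ℤ) : ℝ)) - q 1 = 0 by push_cast; ring,
      show 0 + 2 * d₀ + (q 1 + 2 * π * ((-m : ℤ) : ℝ)) - q 2 = 2 * d₀ by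
        push_cast; linear_combination hm,
      abs_zero, abs_of_nonneg (by linarith : 0 ≤ 2 * d₀)]
    rw [abs_of_nonneg hd0] at hlag
    linarith
  · simp only [trajPt_apply_one, trajPt_apply_two, angleFlow_log_inv_div hC hK.ne']
    push_cast
    ring

theorem exists_isSol_lag_near (hA : 0 < A) (hc : sin (c - α) + 2 * sin (c + α) = 0)
    (hcos : 0 < cos (c - α) + 2 * cos (c + α)) {p : EuclideanSpace ℝ (Fin 3)} (hp : p ∈ Msync)
    {ξ ε : ℝ} (hξ : 0 < ξ) (hε : 0 < ε) :
    ∃ θ0 θ1 θ2 : ℝ → ℝ, IsSol A α ω 0 θ0 θ1 θ2 ∧ dist (trajPt θ0 θ1 θ2 0) p ≤ ξ ∧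
      ∃ t ≥ 0, ∃ j : ℤ, |θ0 t - θ1 t - c - 2 * π * j| ≤ ε := by
  obtain ⟨m, hm⟩ := hp
  obtain ⟨j, hj⟩ := exists_int_abs_sub_two_pi_mul_le (p 0 - p 1 - c)
  obtain ⟨v, hvπ, hv⟩ := exists_abs_lt_pi_abs_sub_le hj hξ
  set K := -(A * (cos (c - α) + 2 * cos (c + α)))
  have hK : K < 0 := neg_neg_of_pos (mul_pos hA hcos)
  set C := tan (v / 2)
  have hd0 : angleFlow C K 0 = v := by
    obtain ⟨hv₁, hv₂⟩ := abs_lt.1 hvπ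
    rw [angleFlow_zero, arctan_tan (by linarith) (by linarith)]
    ring
  obtain ⟨t, hdt, ht⟩ := ((tendsto_angleFlow_atTop C hK).eventually
    (closedBall_mem_nhds 0 hε) |>.and (eventually_ge_atTop 0)).exists
  refine ⟨_, _, _, (isSol_synchronized hc (hasDerivAt_angleFlow C K)).translate (p 1) j 0 (-m),
    ?_, t, ht, j, ?_⟩
  · refine (dist_le_sum_abs_sub _ _).trans ?_
    simp only [Fin.sum_univ_three, trajPt_apply_zero, trajPt_apply_one, trajPt_apply_two,
      leafPhase_zero, hd0]
    rw [show 0 + (c + v) + (p 1 + 2 * π * j) - p 0 = v - (p 0 - p 1 - c - 2 * π * j) by ring,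
      show 0 + (p 1 + 2 * π * ((0 : ℤ) : ℝ)) - p 1 = 0 by push_cast; ring,
      show 0 + (p 1 + 2 * π * ((-m : ℤ) : ℝ)) - p 2 = 0 by push_cast; linear_combination hm]
    simpa using hv
  · rw [Real.dist_eq, sub_zero] at hdt
    convert hdt using 2
    push_cast
    ring

theorem not_expStable_of_subset_Msync (hA : 0 < A)
    (hc : sin (c - α) + 2 * sin (c + α) = 0) (hcos : cos (c - α) < 0)
    (hcos' : 0 < cos (c - α) + 2 * cos (c + α)) {N : Set (EuclideanSpace ℝ (Fin 3))}
    (hN : N.Nonempty) (hNM : N ⊆ Msync) : ¬ ExpStable A α ω 0 N := by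
  intro hstab
  obtain ⟨δ, hδ, k, hk, hbound⟩ := hstab.exists_infDist_le_mul
  set ε := min (δ / 4) (1 / (4 * k))
  have hε : 0 < ε := lt_min (by positivity) (by positivity)
  have hεδ : ε ≤ δ / 4 := min_le_left _ _
  have hεk : k * ε ≤ 1 / 4 := by
    have := mul_le_mul_of_nonneg_left (min_le_right (δ / 4) (1 / (4 * k))) hk.le
    rwa [show k * (1 / (4 * k)) = 1 / 4 by field_simp] at this
  by_cases hnear : ∃ q ∈ N, ∃ j : ℤ, |q 0 - q 1 - c - 2 * π * j| < ε
  · obtain ⟨q, hq, j, hj⟩ := hnear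
    obtain ⟨θ0, θ1, θ2, hsol, h0, t, ht, hfar⟩ :=
      exists_isSol_escaping_Msync (ω := ω) hA hc hcos (hNM hq) j hε
    have hstart : infDist (trajPt θ0 θ1 θ2 0) N ≤ 2 * ε :=
      (infDist_le_dist_of_mem hq).trans (by linarith)
    have hend : π / 2 ≤ infDist (trajPt θ0 θ1 θ2 t) N :=
      hfar.trans (infDist_le_infDist_of_subset hNM hN)
    have := hbound θ0 θ1 θ2 hsol (by linarith) t ht
    nlinarith [mul_le_mul_of_nonneg_left hstart hk.le, pi_gt_three]
  · push Not at hnear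
    obtain ⟨p, hp⟩ := hN
    set ξ := min (δ / 2) (ε / (8 * k))
    have hξ : 0 < ξ := lt_min (by positivity) (by positivity)
    have hξk : k * ξ ≤ ε / 8 := by
      have := mul_le_mul_of_nonneg_left (min_le_right (δ / 2) (ε / (8 * k))) hk.le
      rwa [show k * (ε / (8 * k)) = ε / 8 by field_simp] at this
    obtain ⟨θ0, θ1, θ2, hsol, h0, t, ht, j, hlag⟩ :=
      exists_isSol_lag_near (ω := ω) hA hc hcos' (hNM hp) hξ (half_pos hε)
    have hstart : infDist (trajPt θ0 θ1 θ2 0) N ≤ ξ := (infDist_le_dist_of_mem hp).trans h0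
    have hend : ε / 4 ≤ infDist (trajPt θ0 θ1 θ2 t) N := (le_infDist ⟨p, hp⟩).2 fun n hn => by
      have hn := hnear n hn j
      have hdist := abs_sub_sub_le_two_mul_dist (trajPt θ0 θ1 θ2 t) n 0 1
      have hrev := abs_sub_abs_le_abs_sub (n 0 - n 1 - c - 2 * π * j) (θ0 t - θ1 t - c - 2 * π * j)
      rw [show n 0 - n 1 - c - 2 * π * j - (θ0 t - θ1 t - c - 2 * π * j)
        = -((θ0 t - θ1 t) - (n 0 - n 1)) by ring, abs_neg] at hrev
      simp only [trajPt_apply_zero, trajPt_apply_one] at hdist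
      linarith
    have := hbound θ0 θ1 θ2 hsol (by linarith [min_le_left (δ / 2) (ε / (8 * k))]) t ht
    nlinarith [mul_le_mul_of_nonneg_left hstart hk.le]

end Instability

theorem stmt_6_general (A α ω : ℝ) (hA : 0 < A) (hα : α ∈ Set.Ioo 0 (π / 2))
    (hαbig : Real.arctan (Real.sqrt 3) < α) :
    (∀ N : Set (EuclideanSpace ℝ (Fin 3)), N.Nonempty → N ⊆ Msync →
      PosInvariant A α ω 0 N → ¬ ExpStable A α ω 0 N) ∧
    ¬ ExpStable A α ω 0 (M1 α) ∧
    ¬ ExpStable A α ω 0 (M1' α) := by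
  have hcos : 0 < cos α := cos_pos_of_mem_Ioo ⟨by linarith [hα.1, pi_pos], hα.2⟩
  have hcos_lt : cos α < 1 / 2 := by
    rw [arctan_sqrt_three] at hαbig
    simpa using cos_lt_cos_of_nonneg_of_le_pi (by positivity) (by linarith [hα.2, pi_pos]) hαbig
  have key := fun {N} => not_expStable_of_subset_Msync (ω := ω) (N := N) hA
    (sin_cAlpha_sub_add_two_mul_sin_cAlpha_add hcos.ne') (cos_cAlpha_sub_neg hcos hcos_lt)
    (cos_cAlpha_sub_add_two_mul_cos_cAlpha_add_pos hcos)
  refine ⟨fun N hN hNM _ => key hN hNM, key ?_ fun _ h => h.1, key ?_ fun _ h => h.1⟩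
  · exact ⟨WithLp.toLp 2 ![cAlpha α, 0, 0], ⟨0, by simp⟩, ⟨0, by simp⟩⟩
  · exact ⟨WithLp.toLp 2 ![π + cAlpha α, 0, 0], ⟨0, by simp⟩, ⟨0, by simp⟩⟩

/-- For zero detuning and α > arctan √3: no nonempty positively invariant manifold
contained in M is exponentially stable; in particular both M₁ and M₁' fail to be
exponentially stable. -/
theorem stmt_6 (A α ω : ℝ) (hA : 0 < A) (hω : 0 < ω) (hα : α ∈ Set.Ioo 0 (π / 2))
    (hαbig : Real.arctan (Real.sqrt 3) < α) :
    (∀ N : Set (EuclideanSpace ℝ (Fin 3)), N.Nonempty → N ⊆ Msync →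
      PosInvariant A α ω 0 N → ¬ ExpStable A α ω 0 N) ∧
    ¬ ExpStable A α ω 0 (M1 α) ∧
    ¬ ExpStable A α ω 0 (M1' α) :=
  stmt_6_general A α ω hA hα hαbig
end

section
/- Let θ = (θ₀, θ₁, θ₂) ∈ 𝕊³ and define z₁ = (1/2)(cos(θ₀ − θ₁) + cos(θ₀ − θ₂)) and z₂ = (1/2)(sin(θ₀ − θ₁) + sin(θ₀ − θ₂)). Then z₁² + z₂² = 1 if and only if θ₁ = θ₂ (as points on the circle, i.e., θ₁ − θ₂ is an integer multiple of 2π). Equivalently, θ belongs to the remote synchronization manifold M = {θ ∈ 𝕊³ : θ₁ = θ₂} if and only if (z₁, z₂) belongs to the unit circle L = {z ∈ ℝ² : z₁² + z₂² = 1}. -/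
open Real

/-!
The point `(z₁, z₂)` is the midpoint of the unit vectors at angles `θ₀ - θ₁` and `θ₀ - θ₂`, so its
squared length is `(1 + cos (θ₁ - θ₂)) / 2`. This equals `1` exactly when `cos (θ₁ - θ₂) = 1`,
i.e. when `θ₁ - θ₂ ∈ 2πℤ`.
-/

lemma sq_half_add_cos_add_sq_half_add_sin (a b : ℝ) :
    ((1/2) * (cos a + cos b)) ^ 2 + ((1/2) * (sin a + sin b)) ^ 2 = (1 + cos (a - b)) / 2 := by
  rw [cos_sub]
  nlinarith [sin_sq_add_cos_sq a, sin_sq_add_cos_sq b]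

lemma cos_eq_one_iff_exists_eq_two_pi_mul (x : ℝ) : cos x = 1 ↔ ∃ k : ℤ, x = 2 * π * k := by
  simp only [cos_eq_one_iff, eq_comm (a := x), mul_comm (2 * π)]

/-- With z₁ = (1/2)(cos(θ₀−θ₁)+cos(θ₀−θ₂)) and z₂ = (1/2)(sin(θ₀−θ₁)+sin(θ₀−θ₂)),
the point (z₁, z₂) lies on the unit circle L = {z : z₁² + z₂² = 1} if and only if
θ₁ = θ₂ as points on the circle, i.e. θ₁ − θ₂ is an integer multiple of 2π
(equivalently, θ lies on the remote synchronization manifold M). -/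
theorem stmt_9 (θ₀ θ₁ θ₂ : ℝ) :
    (((1/2) * (Real.cos (θ₀ - θ₁) + Real.cos (θ₀ - θ₂)),
      (1/2) * (Real.sin (θ₀ - θ₁) + Real.sin (θ₀ - θ₂)))
        ∈ {z : ℝ × ℝ | z.1^2 + z.2^2 = 1})
    ↔ ∃ k : ℤ, θ₁ - θ₂ = 2 * π * (k : ℝ) := by
  have hdiff : θ₀ - θ₁ - (θ₀ - θ₂) = -(θ₁ - θ₂) := by ring
  rw [Set.mem_ofPred_eq, sq_half_add_cos_add_sq_half_add_sin, hdiff, cos_neg,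
    ← cos_eq_one_iff_exists_eq_two_pi_mul]
  constructor <;> intro h <;> linarith
end

section
/- Let α ∈ (0, π/2), A > 0, and c(α) = −arctan(sin α/(3 cos α)). Then for every x ∈ (−π, π + c(α)) with x ≠ c(α), one has (x − c(α))·(2 sin(x + α) + sin(x − α)) > 0. Consequently, V(x) = (1/2)(x − c(α))² is a strict Lyapunov function for the scalar dynamics ẋ = −2A sin(x + α) − A sin(x − α) on (−π, π + c(α)): its derivative along trajectories, −A(x − c(α))(2 sin(x + α) + sin(x − α)), is negative for all x in that interval except x = c(α), where it vanishes. -/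
/-!
By the angle-addition formulas, `2 sin(x + α) + sin(x - α) = 3 cos α · sin x + sin α · cos x`,
and a phase shift rewrites this as `R · sin(x - c(α))` with amplitude
`R = √(9 cos² α + sin² α) > 0`. So with `y = x - c(α)` the product in question is `R · y sin y`,
which is positive for `0 < |y| < π`; and `x ∈ (-π, π + c(α))`, `x ≠ c(α)` puts `y` in that
range because `c(α) ≤ 0`.
-/

open Real

open Set

lemma mul_sin_pos_of_mem_Ioo {y : ℝ} (hy : y ∈ Ioo (-π) π) (h0 : y ≠ 0) : 0 < y * sin y := by
  rcases h0.lt_or_gt with hneg | hpos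
  · have hsin : 0 < sin (-y) := sin_pos_of_pos_of_lt_pi (by linarith) (by linarith [hy.1])
    rw [sin_neg] at hsin
    exact mul_pos_of_neg_of_neg hneg (by linarith)
  · exact mul_pos hpos (sin_pos_of_pos_of_lt_pi hpos hy.2)

lemma mul_sin_add_mul_cos_eq_sqrt_mul_sin {p : ℝ} (hp : 0 < p) (q x : ℝ) :
    p * sin x + q * cos x = √(p ^ 2 + q ^ 2) * sin (x + arctan (q / p)) := by
  have hnorm : √(p ^ 2 + q ^ 2) = p * √(1 + (q / p) ^ 2) := by
    refine (sqrt_eq_iff_mul_self_eq_of_pos (by positivity)).2 ?_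
    rw [mul_mul_mul_comm, mul_self_sqrt (by positivity)]
    field_simp
  have hpos : 0 < √(1 + (q / p) ^ 2) := sqrt_pos.2 (by positivity)
  rw [sin_add, sin_arctan, cos_arctan, hnorm]
  field_simp

lemma two_sin_add_add_sin_sub_eq {α : ℝ} (hcos : 0 < cos α) (x : ℝ) :
    2 * sin (x + α) + sin (x - α) = √((3 * cos α) ^ 2 + sin α ^ 2) * sin (x - cAlpha α) := by
  rw [cAlpha, sub_neg_eq_add, ← mul_sin_add_mul_cos_eq_sqrt_mul_sin (by positivity),
    sin_add, sin_sub]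
  ring

lemma cAlpha_nonpos {α : ℝ} (hsin : 0 ≤ sin α) (hcos : 0 < cos α) : cAlpha α ≤ 0 :=
  neg_nonpos.2 (arctan_nonneg.2 (by positivity))

lemma sub_cAlpha_mul_two_sin_add_add_sin_sub_pos {α x : ℝ} (hsin : 0 ≤ sin α) (hcos : 0 < cos α)
    (hx : x ∈ Ioo (-π) (π + cAlpha α)) (hne : x ≠ cAlpha α) :
    0 < (x - cAlpha α) * (2 * sin (x + α) + sin (x - α)) := by
  have hy : x - cAlpha α ∈ Ioo (-π) π :=
    ⟨by linarith [hx.1, cAlpha_nonpos hsin hcos], by linarith [hx.2]⟩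
  have hamp : 0 < √((3 * cos α) ^ 2 + sin α ^ 2) := sqrt_pos.2 (by positivity)
  rw [two_sin_add_add_sin_sub_eq hcos, mul_left_comm]
  exact mul_pos hamp (mul_sin_pos_of_mem_Ioo hy (sub_ne_zero.2 hne))

/-- For α ∈ (0, π/2), A > 0: for every x ∈ (−π, π + c(α)) with x ≠ c(α) one has
(x − c(α))(2 sin(x+α) + sin(x−α)) > 0; consequently the derivative of
V(x) = (1/2)(x − c(α))² along ẋ = −2A sin(x+α) − A sin(x−α), namely
−A(x − c(α))(2 sin(x+α) + sin(x−α)), is negative there and vanishes at x = c(α). -/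
theorem stmt_11 (A α : ℝ) (hA : 0 < A) (hα : α ∈ Set.Ioo 0 (π / 2)) :
    (∀ x ∈ Set.Ioo (-π) (π + cAlpha α), x ≠ cAlpha α →
      0 < (x - cAlpha α) * (2 * Real.sin (x + α) + Real.sin (x - α))) ∧
    (∀ x ∈ Set.Ioo (-π) (π + cAlpha α), x ≠ cAlpha α →
      -A * (x - cAlpha α) * (2 * Real.sin (x + α) + Real.sin (x - α)) < 0) ∧
    -A * (cAlpha α - cAlpha α) *
        (2 * Real.sin (cAlpha α + α) + Real.sin (cAlpha α - α)) = 0 := by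
  have hsin : 0 ≤ sin α := sin_nonneg_of_nonneg_of_le_pi hα.1.le (by linarith [hα.2, pi_pos])
  have hcos : 0 < cos α := cos_pos_of_mem_Ioo ⟨by linarith [hα.1, pi_pos], hα.2⟩
  have hpos : ∀ x ∈ Ioo (-π) (π + cAlpha α), x ≠ cAlpha α →
      0 < (x - cAlpha α) * (2 * sin (x + α) + sin (x - α)) :=
    fun _ hx hne => sub_cAlpha_mul_two_sin_add_add_sin_sub_pos hsin hcos hx hne
  refine ⟨hpos, fun x hx hne => ?_, by simp⟩
  rw [mul_assoc]
  exact mul_neg_of_neg_of_pos (neg_neg_of_pos hA) (hpos x hx hne)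
end

section
/- Let θ(t) = (θ₀(t), θ₁(t), θ₂(t)) be a solution of the Kuramoto–Sakaguchi star network θ̇ᵢ = ω + A sin(θ₀ − θᵢ − α) for i = 1,2 and θ̇₀ = ω + Σ_{j=1}^2 A sin(θⱼ − θ₀ − α) + u, with A > 0, α ∈ (0, π/2), and suppose θ₁(t) = θ₂(t) (the solution lies on the remote synchronization manifold). Then the frequencies v₁ = θ̇₁ + θ̇₂ and v₂ = θ̇₀ satisfy the ellipse identity (v₁ + v₂ − 3ω − u)²/(16A² sin²α) + (v₁ − v₂ − ω + u)²/(16A² cos²α) = 1 at every time t. -/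
open Real

/-!
On the manifold θ₁ = θ₂, with x = θ₀ − θ₁, the frequencies are v₁ = 2ω + 2A sin(x − α) and
v₂ = ω + u − 2A sin(x + α). By the sum-to-product formulas the two shifted combinations are
v₁ + v₂ − 3ω − u = −4A sin α cos x and v₁ − v₂ − ω + u = 4A cos α sin x, so the point lies on the
ellipse with semi-axes 4A sin α and 4A cos α, parametrised by x.
-/

theorem sq_mul_cos_div_sq_add_sq_mul_sin_div_sq {a b : ℝ} (ha : a ≠ 0) (hb : b ≠ 0) (x : ℝ) :
    (a * cos x) ^ 2 / a ^ 2 + (b * sin x) ^ 2 / b ^ 2 = 1 := by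
  rw [mul_pow, mul_pow, mul_div_cancel_left₀ _ (pow_ne_zero 2 ha),
    mul_div_cancel_left₀ _ (pow_ne_zero 2 hb), cos_sq_add_sin_sq]

theorem sin_sub_sub_sin_add (x α : ℝ) : sin (x - α) - sin (x + α) = -2 * sin α * cos x := by
  rw [sin_sub, sin_add]; ring

theorem sin_sub_add_sin_add (x α : ℝ) : sin (x - α) + sin (x + α) = 2 * cos α * sin x := by
  rw [sin_sub, sin_add]; ring

theorem stmt_17_general (A α u ω : ℝ) (hA : 0 < A) (hα : α ∈ Set.Ioo 0 (π / 2))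
    (θ0 θ1 θ2 : ℝ → ℝ)
    (h1 : ∀ t : ℝ, HasDerivAt θ1 (ω + A * Real.sin (θ0 t - θ1 t - α)) t)
    (h2 : ∀ t : ℝ, HasDerivAt θ2 (ω + A * Real.sin (θ0 t - θ2 t - α)) t)
    (h0 : ∀ t : ℝ, HasDerivAt θ0
      (ω + (A * Real.sin (θ1 t - θ0 t - α) + A * Real.sin (θ2 t - θ0 t - α)) + u) t)
    (hsync : ∀ t : ℝ, θ1 t = θ2 t) :
    ∀ t : ℝ,
      ((deriv θ1 t + deriv θ2 t) + deriv θ0 t - 3 * ω - u)^2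
          / (16 * A^2 * Real.sin α ^ 2)
        + ((deriv θ1 t + deriv θ2 t) - deriv θ0 t - ω + u)^2
          / (16 * A^2 * Real.cos α ^ 2) = 1 := by
  intro t
  set x := θ0 t - θ1 t
  have hsin : sin α ≠ 0 := (sin_pos_of_pos_of_lt_pi hα.1 (by linarith [hα.2, pi_pos])).ne'
  have hcos : cos α ≠ 0 := (cos_pos_of_mem_Ioo ⟨by linarith [hα.1, pi_pos], hα.2⟩).ne'
  have hv1 : deriv θ1 t + deriv θ2 t = 2 * ω + 2 * A * sin (x - α) := by
    rw [(h1 t).deriv, (h2 t).deriv, ← hsync t]; ring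
  have hv2 : deriv θ0 t = ω + u - 2 * A * sin (x + α) := by
    rw [(h0 t).deriv, ← hsync t, show θ1 t - θ0 t - α = -(x + α) by ring, sin_neg]; ring
  have hsum : (deriv θ1 t + deriv θ2 t) + deriv θ0 t - 3 * ω - u = -4 * A * sin α * cos x := by
    rw [hv1, hv2]; linear_combination 2 * A * sin_sub_sub_sin_add x α
  have hdiff : (deriv θ1 t + deriv θ2 t) - deriv θ0 t - ω + u = 4 * A * cos α * sin x := by
    rw [hv1, hv2]; linear_combination 2 * A * sin_sub_add_sin_add x α
  rw [hsum, hdiff]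
  convert sq_mul_cos_div_sq_add_sq_mul_sin_div_sq (a := -4 * A * sin α) (b := 4 * A * cos α)
    (by simp [hA.ne', hsin]) (by simp [hA.ne', hcos]) x using 3 <;> ring

/-- Along a remotely synchronized solution (θ₁ ≡ θ₂) of the Kuramoto–Sakaguchi star
network with detuning u, the frequencies v₁ = θ̇₁ + θ̇₂ and v₂ = θ̇₀ satisfy the
ellipse identity
(v₁+v₂−3ω−u)²/(16A² sin²α) + (v₁−v₂−ω+u)²/(16A² cos²α) = 1 at every time. -/
theorem stmt_17 (A α u ω : ℝ) (hA : 0 < A) (hα : α ∈ Set.Ioo 0 (π / 2)) (hω : 0 < ω)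
    (θ0 θ1 θ2 : ℝ → ℝ)
    (h1 : ∀ t : ℝ, HasDerivAt θ1 (ω + A * Real.sin (θ0 t - θ1 t - α)) t)
    (h2 : ∀ t : ℝ, HasDerivAt θ2 (ω + A * Real.sin (θ0 t - θ2 t - α)) t)
    (h0 : ∀ t : ℝ, HasDerivAt θ0
      (ω + (A * Real.sin (θ1 t - θ0 t - α) + A * Real.sin (θ2 t - θ0 t - α)) + u) t)
    (hsync : ∀ t : ℝ, θ1 t = θ2 t) :
    ∀ t : ℝ,
      ((deriv θ1 t + deriv θ2 t) + deriv θ0 t - 3 * ω - u)^2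
          / (16 * A^2 * Real.sin α ^ 2)
        + ((deriv θ1 t + deriv θ2 t) - deriv θ0 t - ω + u)^2
          / (16 * A^2 * Real.cos α ^ 2) = 1 :=
  stmt_17_general A α u ω hA hα θ0 θ1 θ2 h1 h2 h0 hsync
end
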